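/- arXiv:0904.0899 — 4 statements merged into one kernel-verified Lean document; each statement's English description precedes it below -/
import Mathlib

section
/- Let k be a field and G a group of ring automorphisms of the polynomial ring k[t] each of which maps the subfield k into itself. Then the field of G-invariants of the rational function field k(t) equals the field of fractions of the ring of G-invariant polynomials: every f in k(t)^G can be written as f = u/v with u, v in k[t]^G. -/
/-!
Every `g ∈ G` acts on `k[t]` as a semilinear substitution `t ↦ a t + b`, so it preserves
degrees and hence the valuation at infinity `v∞` of `k(t)`. The decomposition `f = q + r` of
an invariant `f` into a polynomial `q` and a proper fraction `r` (`v∞ r < 1`) is unique, so `G`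
fixes both `q` and `r`. If `r ≠ 0`, the invariant `r⁻¹` has a denominator of smaller degree
than `f`, so by induction `r⁻¹ = u / w` with `u, w` invariant, and `f = (q u + w) / u`: the
argument is the continued fraction expansion of `f`.
-/

open Polynomial

theorem RingHom.exists_comp_eq_of_forall_mem_range {R S : Type*} [Ring R] [Ring S] {j : R →+* S}
    (hj : Function.Injective j) (ψ : S →+* S) (h : ∀ r, ψ (j r) ∈ j.range) :
    ∃ e : R →+* R, ψ.comp j = j.comp e :=
  ⟨(RingEquiv.ofLeftInverse (Function.leftInverse_invFun hj)).symm.toRingHom.comp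
      ((ψ.comp j).codRestrict j.range h),
    RingHom.ext fun r => (Function.invFun_eq (h r)).symm⟩

theorem Polynomial.natDegree_apply_eq_of_surjective {k : Type*} [Field k] {e : k[X] →+* k[X]}
    (he : Function.Surjective e) (hC : ∀ a, ∃ b, e (C a) = C b) (p : k[X]) :
    (e p).natDegree = p.natDegree := by
  set σ : k →+* k := constantCoeff.comp (e.comp C)
  have hσ : e.comp C = C.comp σ := by
    ext a
    obtain ⟨b, hb⟩ := hC a
    simp [σ, hb]
  -- `e q = (q.map σ).comp (e X)`, and `X ∈ range e` forces `(e X).natDegree = 1`.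
  have hdeg : ∀ q : k[X], (e q).natDegree = q.natDegree * (e X).natDegree := fun q => by
    rw [← natDegree_map (p := q) σ, ← natDegree_comp, comp, eval₂_map, ← hσ, ← hom_eval₂,
      eval₂_C_X]
  obtain ⟨y, hy⟩ := he X
  have hX : (e X).natDegree = 1 :=
    Nat.eq_one_of_mul_eq_one_left (by rw [← hdeg, hy, natDegree_X])
  rw [hdeg, hX, mul_one]

namespace RatFunc

variable {k : Type*} [Field k]

theorem eq_divByMonic_add_modByMonic_div (x : RatFunc k) :
    x = algebraMap k[X] (RatFunc k) (x.num /ₘ x.denom) +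
      algebraMap k[X] (RatFunc k) (x.num %ₘ x.denom) / algebraMap k[X] (RatFunc k) x.denom := by
  conv_lhs => rw [← num_div_denom x, ← modByMonic_add_div x.num x.denom]
  rw [map_add, map_mul, add_div, mul_div_cancel_left₀ _ (algebraMap_ne_zero x.denom_ne_zero),
    add_comm]

variable [DecidableEq (RatFunc k)]

theorem inftyValuation_modByMonic_div_lt_one (p : k[X]) {q : k[X]} (hq : q.Monic) :
    inftyValuation k
      (algebraMap k[X] (RatFunc k) (p %ₘ q) / algebraMap k[X] (RatFunc k) q) < 1 := by
  rcases eq_or_ne (p %ₘ q) 0 with hr | hr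
  · simp [hr]
  have hq1 : q ≠ 1 := by rintro rfl; exact hr (modByMonic_one p)
  rw [inftyValuation_apply, inftyValuation_of_nonzero _
    (div_ne_zero (algebraMap_ne_zero hr) (algebraMap_ne_zero hq.ne_zero)),
    intDegree_div (algebraMap_ne_zero hr) (algebraMap_ne_zero hq.ne_zero),
    intDegree_polynomial, intDegree_polynomial, ← WithZero.exp_zero, WithZero.exp_lt_exp,
    sub_neg, Nat.cast_lt]
  exact natDegree_modByMonic_lt p hq hq1

theorem eq_zero_of_inftyValuation_algebraMap_lt_one {p : k[X]}
    (h : inftyValuation k (algebraMap k[X] (RatFunc k) p) < 1) : p = 0 := by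
  by_contra hp
  rw [inftyValuation_apply, inftyValuation.polynomial _ hp, ← WithZero.exp_zero,
    WithZero.exp_lt_exp] at h
  omega

theorem natDegree_denom_inv_lt {r : RatFunc k} (hr0 : r ≠ 0) (hr : inftyValuation k r < 1) :
    r⁻¹.denom.natDegree < r.denom.natDegree := by
  rw [inftyValuation_apply, inftyValuation_of_nonzero _ hr0, ← WithZero.exp_zero,
    WithZero.exp_lt_exp, intDegree, sub_neg, Nat.cast_lt] at hr
  exact (natDegree_le_of_dvd (denom_inv_dvd hr0) (num_ne_zero hr0)).trans_lt hr

theorem inftyValuation_map_eq {ψ : RatFunc k →+* RatFunc k}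
    (hpoly : ∀ p, ∃ q, ψ (algebraMap k[X] (RatFunc k) p) = algebraMap k[X] (RatFunc k) q)
    (hsurj : ∀ q, ∃ p, ψ (algebraMap k[X] (RatFunc k) p) = algebraMap k[X] (RatFunc k) q)
    (hconst : ∀ a, ∃ b, ψ (C a) = C b) (x : RatFunc k) :
    inftyValuation k (ψ x) = inftyValuation k x := by
  obtain ⟨e, he⟩ := RingHom.exists_comp_eq_of_forall_mem_range (algebraMap_injective k) ψ
    fun p => (hpoly p).imp fun _ => Eq.symm
  have hψe (p : k[X]) : ψ (algebraMap k[X] (RatFunc k) p) = algebraMap k[X] (RatFunc k) (e p) :=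
    RingHom.congr_fun he p
  have hdeg : ∀ p, (e p).natDegree = p.natDegree := by
    refine natDegree_apply_eq_of_surjective (fun q => ?_) (fun a => ?_)
    · obtain ⟨p, hp⟩ := hsurj q
      exact ⟨p, algebraMap_injective k (by rw [← hψe, hp])⟩
    · obtain ⟨b, hb⟩ := hconst a
      exact ⟨b, algebraMap_injective k (by rw [← hψe, algebraMap_C, algebraMap_C, hb])⟩
  rcases eq_or_ne x 0 with rfl | hx
  · rw [map_zero]
  have hψx : ψ x =
      algebraMap k[X] (RatFunc k) (e x.num) / algebraMap k[X] (RatFunc k) (e x.denom) := by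
    conv_lhs => rw [← num_div_denom x]
    rw [map_div₀, hψe, hψe]
  have he0 : ∀ p : k[X], p ≠ 0 → algebraMap k[X] (RatFunc k) (e p) ≠ 0 := fun p hp => by
    rw [← hψe]; exact (map_ne_zero ψ).2 (algebraMap_ne_zero hp)
  rw [inftyValuation_apply, inftyValuation_apply, inftyValuation_of_nonzero _ hx,
    inftyValuation_of_nonzero _ ((map_ne_zero ψ).2 hx), hψx,
    intDegree_div (he0 _ (num_ne_zero hx)) (he0 _ x.denom_ne_zero), intDegree_polynomial,
    intDegree_polynomial, hdeg, hdeg, intDegree]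

theorem map_algebraMap_eq_of_map_add_eq {ψ : RatFunc k →+* RatFunc k}
    (hv : ∀ x, inftyValuation k (ψ x) = inftyValuation k x)
    (hpoly : ∀ p, ∃ q, ψ (algebraMap k[X] (RatFunc k) p) = algebraMap k[X] (RatFunc k) q)
    {p : k[X]} {r : RatFunc k} (hr : inftyValuation k r < 1)
    (h : ψ (algebraMap k[X] (RatFunc k) p + r) = algebraMap k[X] (RatFunc k) p + r) :
    ψ (algebraMap k[X] (RatFunc k) p) = algebraMap k[X] (RatFunc k) p := by
  obtain ⟨q, hq⟩ := hpoly p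
  have hqp : algebraMap k[X] (RatFunc k) (q - p) = r - ψ r := by
    rw [map_add, hq] at h
    rw [map_sub]
    linear_combination h
  have hqp0 : q - p = 0 := eq_zero_of_inftyValuation_algebraMap_lt_one <| by
    rw [hqp]
    exact Valuation.map_sub_lt _ hr (by rwa [hv])
  rw [hq, sub_eq_zero.mp hqp0]

theorem inftyValuation_smul {G : Type*} [Group G] [MulSemiringAction G (RatFunc k)]
    (hpoly : ∀ (g : G) (p : k[X]), ∃ q : k[X],
      g • algebraMap k[X] (RatFunc k) p = algebraMap k[X] (RatFunc k) q)
    (hconst : ∀ (g : G) (a : k), ∃ b, g • C a = C b) (g : G) (x : RatFunc k) :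
    inftyValuation k (g • x) = inftyValuation k x :=
  inftyValuation_map_eq (ψ := MulSemiringAction.toRingHom G (RatFunc k) g) (hpoly g)
    (fun q => (hpoly g⁻¹ q).imp fun p hp => by
      rw [MulSemiringAction.toRingHom_apply, ← hp, smul_inv_smul])
    (hconst g) x

end RatFunc

/-- Let `k` be a field and `G` a group acting on `k[t]` by ring
automorphisms mapping `k` into itself (the action is given here by its unique
extension to the fraction field `k(t) = RatFunc k`, which restricts to the
polynomial ring and to the constants).  Then every `G`-invariant element of
`k(t)` can be written as a quotient `u/v` of two `G`-invariant polynomials. -/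
theorem invariant_field_is_fraction_field_of_invariant_polynomials
    (k : Type*) [Field k] (G : Type*) [Group G]
    [MulSemiringAction G (RatFunc k)]
    (hpoly : ∀ (g : G) (p : Polynomial k), ∃ q : Polynomial k,
      g • (algebraMap (Polynomial k) (RatFunc k) p) = algebraMap (Polynomial k) (RatFunc k) q)
    (hconst : ∀ (g : G) (a : k), ∃ b : k, g • (RatFunc.C a) = RatFunc.C b)
    (f : RatFunc k) (hf : ∀ g : G, g • f = f) :
    ∃ u v : Polynomial k, v ≠ 0 ∧
      (∀ g : G, g • (algebraMap (Polynomial k) (RatFunc k) u)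
        = algebraMap (Polynomial k) (RatFunc k) u) ∧
      (∀ g : G, g • (algebraMap (Polynomial k) (RatFunc k) v)
        = algebraMap (Polynomial k) (RatFunc k) v) ∧
      f = algebraMap (Polynomial k) (RatFunc k) u / algebraMap (Polynomial k) (RatFunc k) v := by
  classical
  set A := algebraMap k[X] (RatFunc k)
  induction h : f.denom.natDegree using Nat.strong_induction_on generalizing f with
  | _ n ih =>
  set q := f.num /ₘ f.denom
  set r := A (f.num %ₘ f.denom) / A f.denom
  have hfqr : f = A q + r := RatFunc.eq_divByMonic_add_modByMonic_div f
  have hr1 : RatFunc.inftyValuation k r < 1 :=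
    RatFunc.inftyValuation_modByMonic_div_lt_one _ f.monic_denom
  have hq (g : G) : g • A q = A q :=
    RatFunc.map_algebraMap_eq_of_map_add_eq (ψ := MulSemiringAction.toRingHom G (RatFunc k) g)
      (RatFunc.inftyValuation_smul hpoly hconst g) (hpoly g) hr1 (by rw [← hfqr]; exact hf g)
  have hr (g : G) : g • r = r := by
    rw [eq_sub_of_add_eq' hfqr.symm, smul_sub, hf, hq]
  rcases eq_or_ne r 0 with hr0 | hr0
  · exact ⟨q, 1, one_ne_zero, hq, fun g => by rw [map_one, smul_one],
      by rw [hfqr, hr0, map_one, div_one, add_zero]⟩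
  have hlt : r⁻¹.denom.natDegree < n := h ▸ (RatFunc.natDegree_denom_inv_lt hr0 hr1).trans_le
    (natDegree_le_of_dvd (RatFunc.denom_div_dvd _ _) f.denom_ne_zero)
  obtain ⟨u, w, -, hu, hw, hrinv⟩ := ih _ hlt r⁻¹ (fun g => by rw [smul_inv'', hr]) rfl
  have hu0 : u ≠ 0 := by
    rintro rfl
    exact inv_ne_zero hr0 (by rw [hrinv, map_zero, zero_div])
  refine ⟨q * u + w, u, hu0, fun g => ?_, hu, ?_⟩
  · rw [map_add, map_mul, smul_add, smul_mul', hq, hu, hw]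
  · rw [hfqr, ← inv_inv r, hrinv, inv_div, map_add, map_mul, add_div,
      mul_div_cancel_right₀ _ (RatFunc.algebraMap_ne_zero hu0)]
end

section
/- Let k be a field and G a group of ring automorphisms of the polynomial ring k[t] each of which maps the subfield k into itself. Then there exists an invariant polynomial p in k[t]^G such that k(t)^G = k^G(p), the subfield of k(t) generated by the fixed field k^G and p. Moreover, if k[t]^G is not contained in k, then p may be taken to be an element of minimal degree in k[t]^G \ k, and for such p one has k[t]^G = k^G[p]; if instead k[t]^G is contained in k, then k(t)^G = k^G. -/
/-!
Every `g ∈ G` restricts to a ring automorphism of `k[t]` that is semilinear over its restriction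
`σ` to `k`, so it acts as `q ↦ q^σ(g • t)` and, being bijective, preserves degrees. If `u / v` is
a fixed fraction in lowest terms, then `v ∣ g • v` and the degrees agree, so `g` multiplies `u`
and `v` by one and the same constant. Euclidean division of such a pair yields an invariant
quotient and a remainder of the same kind, so the Euclidean algorithm writes `u / v` as a
continued fraction of invariant polynomials. Finally, dividing an invariant polynomial by an
invariant `p` of minimal positive degree leaves an invariant constant remainder, whence
`k[t]^G = k^G[p]` by induction on the degree.
-/

open Polynomial

namespace Polynomial

variable {k : Type*} [Field k]

theorem div_mod_unique {u v s r : k[X]} (hv : v ≠ 0) (h : r + v * s = u)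
    (hr : r.degree < v.degree) : u / v = s ∧ u % v = r := by
  have hlc : v.leadingCoeff ≠ 0 := leadingCoeff_ne_zero.mpr hv
  obtain ⟨hdiv, hmod⟩ := div_modByMonic_unique (f := u) (C v.leadingCoeff * s) r
    (monic_mul_leadingCoeff_inv hv)
    ⟨by rw [← h, mul_assoc, ← mul_assoc (C _), ← C_mul, inv_mul_cancel₀ hlc, C_1, one_mul],
     by rwa [degree_mul_leadingCoeff_inv _ hv]⟩
  refine ⟨?_, hmod⟩
  rw [div_def, hdiv, ← mul_assoc, ← C_mul, inv_mul_cancel₀ hlc, C_1, one_mul]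

theorem forall_ne_C_iff_natDegree_pos {q : k[X]} : (∀ a, q ≠ C a) ↔ 0 < q.natDegree := by
  rw [Nat.pos_iff_ne_zero, Ne, natDegree_eq_zero, not_exists]
  exact forall_congr' fun _ => ne_comm

theorem natDegree_ringEquiv_apply (φ : k[X] ≃+* k[X]) (hφ : ∀ a, ∃ b, φ (C a) = C b)
    (q : k[X]) : (φ q).natDegree = q.natDegree := by
  set σ : k →+* k := constantCoeff.comp ((φ : k[X] →+* k[X]).comp C)
  have hcomp : ∀ r, φ r = (r.map σ).comp (φ X) := by
    have : (φ : k[X] →+* k[X]) = eval₂RingHom (C.comp σ) (φ X) := by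
      refine ringHom_ext (fun a => ?_) (by simp)
      obtain ⟨b, hb⟩ := hφ a
      simp [σ, hb]
    intro r
    rw [comp, eval₂_map]
    exact congrArg (· r) this
  have hX : (φ X).natDegree = 1 := by
    obtain ⟨r, hr⟩ := φ.surjective X
    have := congrArg natDegree ((hcomp r).symm.trans hr)
    rw [natDegree_comp, natDegree_X] at this
    exact Nat.eq_one_of_mul_eq_one_left this
  rw [hcomp, natDegree_comp, hX, mul_one, natDegree_map]

variable {G : Type*} [Group G] [MulSemiringAction G k[X]]
  (hC : ∀ (g : G) (a : k), ∃ b, g • C a = C b)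
include hC

theorem natDegree_smul_eq_of_smul_C (g : G) (q : k[X]) : (g • q).natDegree = q.natDegree :=
  natDegree_ringEquiv_apply (MulSemiringAction.toRingEquiv G k[X] g) (hC g) q

theorem degree_smul_eq_of_smul_C (g : G) (q : k[X]) : (g • q).degree = q.degree := by
  by_cases hq : q = 0
  · rw [hq, smul_zero]
  · rw [degree_eq_natDegree hq, degree_eq_natDegree ((smul_ne_zero_iff_ne g).mpr hq),
      natDegree_smul_eq_of_smul_C hC]

theorem smul_div_eq_and_smul_mod_eq {g : G} {c : k} {u v : k[X]} (hv : v ≠ 0)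
    (hu : g • u = C c * u) (hvc : g • v = C c * v) :
    g • (u / v) = u / v ∧ g • (u % v) = C c * (u % v) := by
  have hc : c ≠ 0 := by
    rintro rfl
    exact (smul_ne_zero_iff_ne g).mpr hv (by rw [hvc, C_0, zero_mul])
  have hCc : C c⁻¹ * C c = 1 := by rw [← C_mul, inv_mul_cancel₀ hc, C_1]
  have h : C c⁻¹ * g • (u % v) + v * g • (u / v) = u := by
    have := congrArg (g • ·) (EuclideanDomain.mod_add_div u v)
    simp only [smul_add, smul_mul', hu, hvc] at this
    linear_combination C c⁻¹ * this + (u - v * g • (u / v)) * hCc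
  obtain ⟨hdiv, hmod⟩ := div_mod_unique hv h
    (by rw [degree_C_mul (inv_ne_zero hc), degree_smul_eq_of_smul_C hC]
        exact degree_mod_lt u hv)
  exact ⟨hdiv.symm, by linear_combination -C c * hmod - g • (u % v) * hCc⟩

theorem exists_smul_eq_C_mul_of_isCoprime {g : G} {u v : k[X]} (huv : IsCoprime u v)
    (hv : v ≠ 0) (h : g • u * v = u * g • v) : ∃ c, g • u = C c * u ∧ g • v = C c * v := by
  obtain ⟨w, hw⟩ : v ∣ g • v := huv.symm.dvd_of_dvd_mul_left ⟨g • u, by rw [← h, mul_comm]⟩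
  have hw0 : w ≠ 0 := by
    rintro rfl
    exact (smul_ne_zero_iff_ne g).mpr hv (by rw [hw, mul_zero])
  have hwC : w = C (w.coeff 0) := by
    refine eq_C_of_natDegree_eq_zero ?_
    have := natDegree_smul_eq_of_smul_C hC g v
    rw [hw, natDegree_mul hv hw0] at this
    omega
  refine ⟨w.coeff 0, mul_right_cancel₀ hv ?_, by rw [hw, mul_comm, ← hwC]⟩
  rw [h, hw, ← hwC]
  ring

theorem fixedPoints_subring_eq_closure_of_minimal {p : k[X]}
    (hp : p ∈ FixedPoints.subring k[X] G) (hp0 : 0 < p.natDegree)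
    (hmin : ∀ q ∈ FixedPoints.subring k[X] G, 0 < q.natDegree → p.natDegree ≤ q.natDegree) :
    FixedPoints.subring k[X] G =
      Subring.closure (Set.range C ∩ FixedPoints.subring k[X] G ∪ {p}) := by
  refine le_antisymm (fun u hu => ?_) (Subring.closure_le.2
    (Set.union_subset Set.inter_subset_right (Set.singleton_subset_iff.2 hp)))
  have hp_ne : p ≠ 0 := ne_zero_of_natDegree_gt hp0
  induction u using degree_lt_wf.induction with
  | _ u ih =>
    have hfix : ∀ g : G, g • (u / p) = u / p ∧ g • (u % p) = u % p := fun g => by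
      simpa using smul_div_eq_and_smul_mod_eq hC (c := 1) hp_ne (by simpa using hu g)
        (by simpa using hp g)
    have hmod : u % p ∈ Set.range C ∩ FixedPoints.subring k[X] G := by
      refine ⟨natDegree_eq_zero.mp ?_, fun g => (hfix g).2⟩
      by_contra hr
      have := natDegree_lt_natDegree (ne_zero_of_natDegree_gt (Nat.pos_of_ne_zero hr))
        (degree_mod_lt u hp_ne)
      exact this.not_ge (hmin _ (fun g => (hfix g).2) (Nat.pos_of_ne_zero hr))
    have hdiv : u / p ∈ Subring.closure (Set.range C ∩ FixedPoints.subring k[X] G ∪ {p}) := by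
      rcases eq_or_ne u 0 with rfl | hu0
      · simp
      exact ih _ (degree_div_lt hu0 (natDegree_pos_iff_degree_pos.mp hp0)) (fun g => (hfix g).1)
    rw [← EuclideanDomain.div_add_mod u p]
    exact add_mem (mul_mem (Subring.subset_closure (Or.inr rfl)) hdiv)
      (Subring.subset_closure (Or.inl hmod))

end Polynomial

theorem Function.Injective.exists_mulSemiringAction {M R S : Type*} [Monoid M] [Semiring R]
    [Semiring S] [MulSemiringAction M S] {f : R →+* S} (hf : Function.Injective f)
    (hrange : ∀ (c : M) (x : R), ∃ y, c • f x = f y) :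
    ∃ _ : MulSemiringAction M R, ∀ (c : M) (x : R), f (c • x) = c • f x := by
  let : SMul M R := ⟨fun c x => (hrange c x).choose⟩
  have hsmul (c : M) (x : R) : f (c • x) = c • f x := (hrange c x).choose_spec.symm
  exact ⟨{ hf.distribMulAction f.toAddMonoidHom hsmul,
    hf.mulDistribMulAction f.toMonoidHom hsmul with }, hsmul⟩

namespace RatFunc

variable {k : Type*} [Field k] {G : Type*} [Group G]

variable (k G) in
def fixedConstants [MulSemiringAction G (RatFunc k)] : Set (RatFunc k) :=
  {x | (∃ a, x = C a) ∧ ∀ g : G, g • x = x}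

theorem fixedConstants_subset_fixedPoints [MulSemiringAction G (RatFunc k)] :
    fixedConstants k G ⊆ FixedPoints.subfield G (RatFunc k) :=
  fun _ hx => hx.2

variable [MulSemiringAction G k[X]]

theorem div_mem_closure_map_fixedPoints
    (hC : ∀ (g : G) (a : k), ∃ b, g • Polynomial.C a = Polynomial.C b)
    {v : k[X]} (hv : v ≠ 0) {u : k[X]}
    (hsemi : ∀ g : G, ∃ c, g • u = Polynomial.C c * u ∧ g • v = Polynomial.C c * v) :
    algebraMap k[X] (RatFunc k) u / algebraMap k[X] (RatFunc k) v ∈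
      Subfield.closure ((FixedPoints.subring k[X] G).map (algebraMap k[X] (RatFunc k))) := by
  induction v using degree_lt_wf.induction generalizing u with
  | _ v ih =>
    have hdm : ∀ g : G, g • (u / v) = u / v ∧
        ∃ c, g • v = Polynomial.C c * v ∧ g • (u % v) = Polynomial.C c * (u % v) := fun g => by
      obtain ⟨c, hu, hvc⟩ := hsemi g
      obtain ⟨hdiv, hmod⟩ := smul_div_eq_and_smul_mod_eq hC hv hu hvc
      exact ⟨hdiv, c, hvc, hmod⟩
    have hsplit : algebraMap k[X] (RatFunc k) u / algebraMap k[X] (RatFunc k) v =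
        algebraMap k[X] (RatFunc k) (u / v) +
          (algebraMap k[X] (RatFunc k) v / algebraMap k[X] (RatFunc k) (u % v))⁻¹ := by
      conv_lhs => rw [← EuclideanDomain.div_add_mod u v]
      rw [map_add, map_mul, add_div, mul_div_cancel_left₀ _ (algebraMap_ne_zero hv), inv_div]
    rw [hsplit]
    refine add_mem (Subfield.subset_closure ⟨u / v, fun g => (hdm g).1, rfl⟩) (inv_mem ?_)
    rcases eq_or_ne (u % v) 0 with hr | hr
    · rw [hr, map_zero, div_zero]
      exact zero_mem _
    exact ih _ (degree_mod_lt u hv) hr (fun g => (hdm g).2)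

variable [MulSemiringAction G (RatFunc k)]
  (hι : ∀ (g : G) (q : k[X]),
    algebraMap k[X] (RatFunc k) (g • q) = g • algebraMap k[X] (RatFunc k) q)
include hι

theorem forall_smul_algebraMap_eq_iff {q : k[X]} :
    (∀ g : G, g • algebraMap k[X] (RatFunc k) q = algebraMap k[X] (RatFunc k) q) ↔
      q ∈ FixedPoints.subring k[X] G :=
  forall_congr' fun g => by rw [← hι, (algebraMap_injective k).eq_iff]

theorem algebraMap_mem_fixedPoints {q : k[X]} (hq : q ∈ FixedPoints.subring k[X] G) :
    algebraMap k[X] (RatFunc k) q ∈ FixedPoints.subfield G (RatFunc k) :=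
  (forall_smul_algebraMap_eq_iff hι).2 hq

theorem exists_smul_C_eq_C (hconst : ∀ (g : G) (a : k), ∃ b, g • C a = C b) (g : G) (a : k) :
    ∃ b, g • Polynomial.C a = Polynomial.C b :=
  (hconst g a).imp fun b hb =>
    algebraMap_injective k (by rw [hι, algebraMap_C, algebraMap_C, hb])

theorem image_range_C_inter_fixedPoints :
    algebraMap k[X] (RatFunc k) '' (Set.range Polynomial.C ∩ FixedPoints.subring k[X] G) =
      fixedConstants k G := by
  ext x
  constructor
  · rintro ⟨_, ⟨⟨a, rfl⟩, hfix⟩, rfl⟩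
    exact ⟨⟨a, algebraMap_C a⟩, algebraMap_mem_fixedPoints hι hfix⟩
  · rintro ⟨⟨a, rfl⟩, hfix⟩
    refine ⟨Polynomial.C a, ⟨⟨a, rfl⟩, (forall_smul_algebraMap_eq_iff hι).1 ?_⟩,
      algebraMap_C a⟩
    rwa [algebraMap_C]

variable (hC : ∀ (g : G) (a : k), ∃ b, g • Polynomial.C a = Polynomial.C b)
include hC

theorem fixedPoints_subfield_eq_closure_map_fixedPoints :
    FixedPoints.subfield G (RatFunc k) =
      Subfield.closure ((FixedPoints.subring k[X] G).map (algebraMap k[X] (RatFunc k))) := by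
  refine le_antisymm (fun x hx => ?_) (Subfield.closure_le.2 ?_)
  · have hnum :
        algebraMap k[X] (RatFunc k) x.num = x * algebraMap k[X] (RatFunc k) x.denom := by
      rw [← div_eq_iff (algebraMap_ne_zero x.denom_ne_zero), num_div_denom]
    rw [← num_div_denom x]
    refine div_mem_closure_map_fixedPoints hC x.denom_ne_zero fun g =>
      exists_smul_eq_C_mul_of_isCoprime hC (isCoprime_num_denom x) x.denom_ne_zero ?_
    apply algebraMap_injective k
    rw [map_mul, map_mul, hι, hι, hnum, smul_mul', hx g]
    ring
  · rintro _ ⟨q, hq, rfl⟩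
    exact algebraMap_mem_fixedPoints hι hq

theorem fixedPoints_subfield_eq_closure {T : Set (RatFunc k)}
    (hT : T ⊆ FixedPoints.subfield G (RatFunc k))
    (hfix : ((FixedPoints.subring k[X] G).map (algebraMap k[X] (RatFunc k)) : Set (RatFunc k)) ⊆
      Subfield.closure T) :
    FixedPoints.subfield G (RatFunc k) = Subfield.closure T := by
  refine le_antisymm ?_ (Subfield.closure_le.2 hT)
  rw [fixedPoints_subfield_eq_closure_map_fixedPoints hι hC]
  exact Subfield.closure_le.2 hfix

theorem fixedPoints_subfield_eq_closure_of_forall_eq_C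
    (hconst : ∀ q ∈ FixedPoints.subring k[X] G, ∃ a, q = Polynomial.C a)
    {T : Set (RatFunc k)} (hST : fixedConstants k G ⊆ T)
    (hT : T ⊆ FixedPoints.subfield G (RatFunc k)) :
    FixedPoints.subfield G (RatFunc k) = Subfield.closure T := by
  refine fixedPoints_subfield_eq_closure hι hC hT ?_
  rintro _ ⟨q, hq, rfl⟩
  obtain ⟨a, rfl⟩ := hconst q hq
  refine Subfield.subset_closure (hST ?_)
  rw [← image_range_C_inter_fixedPoints hι]
  exact ⟨_, ⟨⟨a, rfl⟩, hq⟩, rfl⟩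

theorem map_fixedPoints_subring_eq_closure_of_minimal {p : k[X]}
    (hp : p ∈ FixedPoints.subring k[X] G) (hp0 : 0 < p.natDegree)
    (hmin : ∀ q ∈ FixedPoints.subring k[X] G, 0 < q.natDegree → p.natDegree ≤ q.natDegree) :
    (FixedPoints.subring k[X] G).map (algebraMap k[X] (RatFunc k)) =
      Subring.closure (fixedConstants k G ∪ {algebraMap k[X] (RatFunc k) p}) := by
  rw [fixedPoints_subring_eq_closure_of_minimal hC hp hp0 hmin, RingHom.map_closure,
    Set.image_union, image_range_C_inter_fixedPoints hι, Set.image_singleton]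

theorem fixedPoints_subfield_eq_closure_of_minimal {p : k[X]}
    (hp : p ∈ FixedPoints.subring k[X] G) (hp0 : 0 < p.natDegree)
    (hmin : ∀ q ∈ FixedPoints.subring k[X] G, 0 < q.natDegree → p.natDegree ≤ q.natDegree) :
    FixedPoints.subfield G (RatFunc k) =
      Subfield.closure (fixedConstants k G ∪ {algebraMap k[X] (RatFunc k) p}) :=
  fixedPoints_subfield_eq_closure hι hC (Set.union_subset fixedConstants_subset_fixedPoints
      (Set.singleton_subset_iff.2 (algebraMap_mem_fixedPoints hι hp)))
    (map_fixedPoints_subring_eq_closure_of_minimal hι hC hp hp0 hmin ▸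
      Subfield.subring_closure_le _)

end RatFunc

open RatFunc in
/-- Let `k` be a field and `G` a group acting on `k[t]` by ring
automorphisms mapping `k` into itself (the action is given here by its unique
extension to the fraction field `k(t) = RatFunc k`).  Then there is an invariant
polynomial `p` with `k(t)^G = k^G(p)`.  Moreover, if `k[t]^G ⊆ k` then
`k(t)^G = k^G`, and if `k[t]^G ⊄ k` then `p` may be taken to be any element of
minimal degree in `k[t]^G \ k`, and for such `p` one also has `k[t]^G = k^G[p]`.

Here everything is phrased inside `RatFunc k`:  `S` is the image of `k^G`,
`k^G(p)` is `Subfield.closure (S ∪ {p})` and `k^G[p]` is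
`Subring.closure (S ∪ {p})`. -/
theorem invariant_field_of_polynomial_ring_is_simple
    (k : Type*) [Field k] (G : Type*) [Group G]
    [MulSemiringAction G (RatFunc k)]
    (hpoly : ∀ (g : G) (p : Polynomial k), ∃ q : Polynomial k,
      g • (algebraMap (Polynomial k) (RatFunc k) p) = algebraMap (Polynomial k) (RatFunc k) q)
    (hconst : ∀ (g : G) (a : k), ∃ b : k, g • (RatFunc.C a) = RatFunc.C b) :
    (∃ p : Polynomial k,
      (∀ g : G, g • (algebraMap (Polynomial k) (RatFunc k) p)
          = algebraMap (Polynomial k) (RatFunc k) p) ∧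
      FixedPoints.subfield G (RatFunc k) =
        Subfield.closure
          ({x : RatFunc k | (∃ a : k, x = RatFunc.C a) ∧ ∀ g : G, g • x = x}
            ∪ {algebraMap (Polynomial k) (RatFunc k) p})) ∧
    ((∀ q : Polynomial k,
        (∀ g : G, g • (algebraMap (Polynomial k) (RatFunc k) q)
          = algebraMap (Polynomial k) (RatFunc k) q) → ∃ a : k, q = Polynomial.C a) →
      FixedPoints.subfield G (RatFunc k) =
        Subfield.closure {x : RatFunc k | (∃ a : k, x = RatFunc.C a) ∧ ∀ g : G, g • x = x}) ∧
    (∀ p : Polynomial k,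
      (∀ g : G, g • (algebraMap (Polynomial k) (RatFunc k) p)
          = algebraMap (Polynomial k) (RatFunc k) p) →
      (∀ a : k, p ≠ Polynomial.C a) →
      (∀ q : Polynomial k,
        (∀ g : G, g • (algebraMap (Polynomial k) (RatFunc k) q)
          = algebraMap (Polynomial k) (RatFunc k) q) →
        (∀ a : k, q ≠ Polynomial.C a) → p.natDegree ≤ q.natDegree) →
      FixedPoints.subfield G (RatFunc k) =
        Subfield.closure
          ({x : RatFunc k | (∃ a : k, x = RatFunc.C a) ∧ ∀ g : G, g • x = x}
            ∪ {algebraMap (Polynomial k) (RatFunc k) p}) ∧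
      {x : RatFunc k | ∃ u : Polynomial k,
          (∀ g : G, g • (algebraMap (Polynomial k) (RatFunc k) u)
            = algebraMap (Polynomial k) (RatFunc k) u) ∧
          x = algebraMap (Polynomial k) (RatFunc k) u} =
        ↑(Subring.closure
          ({x : RatFunc k | (∃ a : k, x = RatFunc.C a) ∧ ∀ g : G, g • x = x}
            ∪ {algebraMap (Polynomial k) (RatFunc k) p}))) := by
  obtain ⟨_, hι⟩ := (algebraMap_injective k).exists_mulSemiringAction hpoly
  have hC := exists_smul_C_eq_C hι hconst
  simp only [forall_smul_algebraMap_eq_iff hι, forall_ne_C_iff_natDegree_pos]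
  refine ⟨?_, fun hall => fixedPoints_subfield_eq_closure_of_forall_eq_C hι hC hall subset_rfl
    fixedConstants_subset_fixedPoints, fun p hp hp0 hmin =>
      ⟨fixedPoints_subfield_eq_closure_of_minimal hι hC hp hp0 hmin, ?_⟩⟩
  · by_cases hex : ∃ q ∈ FixedPoints.subring k[X] G, 0 < q.natDegree
    · obtain ⟨p, ⟨hp, hp0⟩, hmin⟩ := (measure natDegree).wf.has_min _ hex
      exact ⟨p, hp, fixedPoints_subfield_eq_closure_of_minimal hι hC hp hp0
        fun q hq hq0 => not_lt.1 (hmin q ⟨hq, hq0⟩)⟩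
    push Not at hex
    refine ⟨1, one_mem _, fixedPoints_subfield_eq_closure_of_forall_eq_C hι hC
      (fun q hq => ⟨_, eq_C_of_natDegree_eq_zero (Nat.le_zero.1 (hex q hq))⟩)
      Set.subset_union_left (Set.union_subset fixedConstants_subset_fixedPoints ?_)⟩
    exact Set.singleton_subset_iff.2 (algebraMap_mem_fixedPoints hι (one_mem _))
  · refine Eq.trans ?_ (congrArg SetLike.coe
      (map_fixedPoints_subring_eq_closure_of_minimal hι hC hp hp0 hmin))
    ext
    simp [eq_comm]
end

section
/- Let d ≥ 5 be odd. Let e_1,…,e_d and f_1,f_2,f_3 be the standard bases of ℂ^d and ℂ³ with dual bases x_1,…,x_d and y_1,y_2,y_3. Let ι : Sym²(ℂ^d)^∨ ⊗ Λ²(ℂ³)^∨ → Λ²((ℂ^d ⊗ ℂ³)^∨) be the linear embedding determined by ι((x_i x_j) ⊗ (y_k ∧ y_l)) = (x_i ⊗ y_k) ∧ (x_j ⊗ y_l) + (x_j ⊗ y_k) ∧ (x_i ⊗ y_l). Set ω = (x_5² − 2x_1x_2) ⊗ (y_2∧y_3) + (x_1² + x_3² + x_4²) ⊗ (y_1∧y_3)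 + (2x_4x_5 − 2x_2x_3) ⊗ (y_1∧y_2), and for each even j with 6 ≤ j ≤ d−1 set π_j = x_j² ⊗ (y_1∧y_2) + (x_j x_{j+1}) ⊗ (y_1∧y_3) + x_{j+1}² ⊗ (y_2∧y_3), and let κ = ω + Σ_j π_j. Then the kernel of the alternating bilinear form ι(κ) on ℂ^d ⊗ ℂ³ is exactly the one-dimensional subspace spanned by m = e_1⊗f_1 + e_2⊗f_2 + e_3⊗f_3; in particular ι(κ) has rank 3d − 1. -/
open Matrix

/-- The alternating form `(x_i ⊗ y_k) ∧ (x_j ⊗ y_l)` on `ℂ^d ⊗ ℂ³`, written as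
a skew-symmetric "matrix" indexed (via natural numbers, 0-based) by pairs
`(index in ℂ^d, index in ℂ³)`. -/
noncomputable def wedgeEntry (i k j l : ℕ) : (ℕ × ℕ) → (ℕ × ℕ) → ℂ := fun p q =>
  (if p = (i, k) ∧ q = (j, l) then 1 else 0) - (if p = (j, l) ∧ q = (i, k) then 1 else 0)

/-- The matrix of `ι((x_i x_j) ⊗ (y_k ∧ y_l)) =
(x_i ⊗ y_k) ∧ (x_j ⊗ y_l) + (x_j ⊗ y_k) ∧ (x_i ⊗ y_l)` (0-based indices). -/
noncomputable def iotaEntry (i j k l : ℕ) : (ℕ × ℕ) → (ℕ × ℕ) → ℂ := fun p q =>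
  wedgeEntry i k j l p q + wedgeEntry j k i l p q

/-- The matrix of `ι(ω)` where
`ω = (x₅² − 2x₁x₂) ⊗ (y₂∧y₃) + (x₁² + x₃² + x₄²) ⊗ (y₁∧y₃) + (2x₄x₅ − 2x₂x₃) ⊗ (y₁∧y₂)`
(indices in the paper are 1-based; here everything is 0-based). -/
noncomputable def omegaEntry : (ℕ × ℕ) → (ℕ × ℕ) → ℂ := fun p q =>
  iotaEntry 4 4 1 2 p q - 2 * iotaEntry 0 1 1 2 p q
    + iotaEntry 0 0 0 2 p q + iotaEntry 2 2 0 2 p q + iotaEntry 3 3 0 2 p q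
    + 2 * iotaEntry 3 4 0 1 p q - 2 * iotaEntry 1 2 0 1 p q

/-- The matrix of `ι(κ)` where `κ = ω + ∑_j π_j`, the sum being over even `j`
with `6 ≤ j ≤ d−1` (1-based), i.e. `j = 6 + 2r`, `0 ≤ r < (d−5)/2`, and
`π_j = x_j² ⊗ (y₁∧y₂) + (x_j x_{j+1}) ⊗ (y₁∧y₃) + x_{j+1}² ⊗ (y₂∧y₃)`
(0-based: `x_j` has index `5 + 2r`). -/
noncomputable def kappaEntry (d : ℕ) : (ℕ × ℕ) → (ℕ × ℕ) → ℂ := fun p q =>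
  omegaEntry p q +
    ∑ r ∈ Finset.range ((d - 5) / 2),
      (iotaEntry (5 + 2 * r) (5 + 2 * r) 0 1 p q
        + iotaEntry (5 + 2 * r) (6 + 2 * r) 0 2 p q
        + iotaEntry (6 + 2 * r) (6 + 2 * r) 1 2 p q)

/-- The skew-symmetric `3d × 3d` matrix of the alternating bilinear form
`ι(κ)` on `ℂ^d ⊗ ℂ³`. -/
noncomputable def kappaMat (d : ℕ) : Matrix (Fin d × Fin 3) (Fin d × Fin 3) ℂ :=
  Matrix.of fun p q => kappaEntry d ((p.1 : ℕ), (p.2 : ℕ)) ((q.1 : ℕ), (q.2 : ℕ))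

/-- The vector `m = e₁⊗f₁ + e₂⊗f₂ + e₃⊗f₃ ∈ ℂ^d ⊗ ℂ³`. -/
noncomputable def mVec (d : ℕ) : Fin d × Fin 3 → ℂ := fun p =>
  if (p.1 : ℕ) = (p.2 : ℕ) then 1 else 0

/-! Write `W a b` for the (0-based) coordinates of `w`, extended by zero to all of `ℕ × ℕ`; each
entry `(a, b)` of `wᵀ ι(κ)` is an explicit linear form in `W`. For `a < 5` only `ω` contributes,
and these entries vanish exactly when the coordinates with `a < 5` are those of a multiple of `m`;
for `a ∈ {5 + 2r, 6 + 2r}` only one `π` contributes, and these entries vanish exactly when the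
coordinates with that `a` vanish. So the left kernel is `ℂ ∙ m`, and rank–nullity for `ι(κ)ᵀ`,
which has the same rank, gives `3d − 1`. -/

theorem Matrix.rank_eq_card_sub_one_of_vecMul_eq_zero_iff {m n K : Type*} [Fintype m]
    [Fintype n] [Field K] {M : Matrix m n K} {v : m → K} (hv : v ≠ 0)
    (h : ∀ w, vecMul w M = 0 ↔ ∃ c : K, w = c • v) : M.rank = Fintype.card m - 1 := by
  have hker : LinearMap.ker Mᵀ.mulVecLin = K ∙ v := by
    ext w
    simp [Submodule.mem_span_singleton, h, eq_comm]
  have hrn := LinearMap.finrank_range_add_finrank_ker Mᵀ.mulVecLin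
  rw [hker, finrank_span_singleton hv, Module.finrank_fintype_fun_eq_card] at hrn
  rw [← rank_transpose, rank]
  omega

namespace KappaKernel

variable {m₁ m₂ : ℕ}

noncomputable def extendByZero (w : Fin m₁ × Fin m₂ → ℂ) (i k : ℕ) : ℂ :=
  if h : i < m₁ ∧ k < m₂ then w (⟨i, h.1⟩, ⟨k, h.2⟩) else 0

lemma extendByZero_coe (w : Fin m₁ × Fin m₂ → ℂ) (p : Fin m₁ × Fin m₂) :
    extendByZero w p.1 p.2 = w p := by
  simp [extendByZero]

lemma sum_mul_ite_coe_eq (w : Fin m₁ × Fin m₂ → ℂ) (i k : ℕ) :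
    ∑ p : Fin m₁ × Fin m₂, w p * (if ((p.1 : ℕ), (p.2 : ℕ)) = (i, k) then 1 else 0) =
      extendByZero w i k := by
  by_cases h : i < m₁ ∧ k < m₂
  · rw [Finset.sum_eq_single (⟨i, h.1⟩, ⟨k, h.2⟩)]
    · simp [extendByZero, h]
    · rintro ⟨a, b⟩ - hab
      simp only [Prod.mk.injEq, mul_ite, mul_one, mul_zero]
      rw [if_neg]
      rintro ⟨rfl, rfl⟩
      exact hab rfl
    · simp
  · rw [extendByZero, dif_neg h]
    refine Finset.sum_eq_zero fun p _ => ?_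
    rw [if_neg, mul_zero]
    simp only [Prod.mk.injEq]
    rintro ⟨rfl, rfl⟩
    exact h ⟨p.1.isLt, p.2.isLt⟩

noncomputable def wedgeContract (W : ℕ → ℕ → ℂ) (i k j l a b : ℕ) : ℂ :=
  (if a = j ∧ b = l then W i k else 0) - (if a = i ∧ b = k then W j l else 0)

lemma sum_mul_ite_and_coe_eq (w : Fin m₁ × Fin m₂ → ℂ) (i k j l : ℕ) (q : Fin m₁ × Fin m₂) :
    ∑ p : Fin m₁ × Fin m₂,
        w p *
          (if ((p.1 : ℕ), (p.2 : ℕ)) = (i, k) ∧ ((q.1 : ℕ), (q.2 : ℕ)) = (j, l) then 1 else 0) =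
      if (q.1 : ℕ) = j ∧ (q.2 : ℕ) = l then extendByZero w i k else 0 := by
  by_cases hq : (q.1 : ℕ) = j ∧ (q.2 : ℕ) = l
  · simp only [hq, and_true, sum_mul_ite_coe_eq, if_true]
  · simp [hq]

lemma sum_mul_wedgeEntry (w : Fin m₁ × Fin m₂ → ℂ) (i k j l : ℕ) (q : Fin m₁ × Fin m₂) :
    ∑ p : Fin m₁ × Fin m₂, w p * wedgeEntry i k j l ((p.1 : ℕ), (p.2 : ℕ)) ((q.1 : ℕ), (q.2 : ℕ)) =
      wedgeContract (extendByZero w) i k j l q.1 q.2 := by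
  simp only [wedgeEntry, wedgeContract, mul_sub, Finset.sum_sub_distrib, sum_mul_ite_and_coe_eq]

noncomputable def iotaContract (W : ℕ → ℕ → ℂ) (i j k l a b : ℕ) : ℂ :=
  wedgeContract W i k j l a b + wedgeContract W j k i l a b

lemma sum_mul_iotaEntry (w : Fin m₁ × Fin m₂ → ℂ) (i j k l : ℕ) (q : Fin m₁ × Fin m₂) :
    ∑ p : Fin m₁ × Fin m₂, w p * iotaEntry i j k l ((p.1 : ℕ), (p.2 : ℕ)) ((q.1 : ℕ), (q.2 : ℕ)) =
      iotaContract (extendByZero w) i j k l q.1 q.2 := by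
  simp only [iotaEntry, iotaContract, mul_add, Finset.sum_add_distrib, sum_mul_wedgeEntry]

noncomputable def omegaContract (W : ℕ → ℕ → ℂ) (a b : ℕ) : ℂ :=
  iotaContract W 4 4 1 2 a b - 2 * iotaContract W 0 1 1 2 a b
    + iotaContract W 0 0 0 2 a b + iotaContract W 2 2 0 2 a b + iotaContract W 3 3 0 2 a b
    + 2 * iotaContract W 3 4 0 1 a b - 2 * iotaContract W 1 2 0 1 a b

noncomputable def piContract (W : ℕ → ℕ → ℂ) (r a b : ℕ) : ℂ :=
  iotaContract W (5 + 2 * r) (5 + 2 * r) 0 1 a b + iotaContract W (5 + 2 * r) (6 + 2 * r) 0 2 a b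
    + iotaContract W (6 + 2 * r) (6 + 2 * r) 1 2 a b

noncomputable def kappaContract (n : ℕ) (W : ℕ → ℕ → ℂ) (a b : ℕ) : ℂ :=
  omegaContract W a b + ∑ r ∈ Finset.range n, piContract W r a b

lemma vecMul_kappaMat {d : ℕ} (w : Fin d × Fin 3 → ℂ) (q : Fin d × Fin 3) :
    vecMul w (kappaMat d) q = kappaContract ((d - 5) / 2) (extendByZero w) q.1 q.2 := by
  simp only [vecMul, dotProduct, kappaMat, of_apply, kappaEntry, omegaEntry, mul_add, mul_sub,
    Finset.mul_sum, Finset.sum_add_distrib, Finset.sum_sub_distrib,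
    Finset.sum_comm (s := (Finset.univ : Finset (Fin d × Fin 3)))]
  simp only [mul_left_comm _ (2 : ℂ), ← Finset.mul_sum, sum_mul_iotaEntry, kappaContract,
    omegaContract, piContract, Finset.sum_add_distrib]

lemma omegaContract_of_five_le (W : ℕ → ℕ → ℂ) {a : ℕ} (b : ℕ) (ha : 5 ≤ a) :
    omegaContract W a b = 0 := by
  simp (disch := omega) only [omegaContract, iotaContract, wedgeContract, if_neg]
  ring

lemma piContract_of_ne (W : ℕ → ℕ → ℂ) (r : ℕ) {a : ℕ} (b : ℕ) (h₁ : a ≠ 5 + 2 * r)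
    (h₂ : a ≠ 6 + 2 * r) : piContract W r a b = 0 := by
  simp (disch := omega) only [piContract, iotaContract, wedgeContract, if_neg]
  ring

lemma kappaContract_of_lt_five (n : ℕ) (W : ℕ → ℕ → ℂ) {a : ℕ} (b : ℕ) (ha : a < 5) :
    kappaContract n W a b = omegaContract W a b := by
  rw [kappaContract, Finset.sum_eq_zero fun r _ => piContract_of_ne W r b (by omega) (by omega),
    add_zero]

lemma kappaContract_of_pair {n r : ℕ} (hr : r < n) (W : ℕ → ℕ → ℂ) {a : ℕ} (b : ℕ)
    (ha : a = 5 + 2 * r ∨ a = 6 + 2 * r) :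
    kappaContract n W a b = piContract W r a b := by
  rw [kappaContract, omegaContract_of_five_le W b (by omega), zero_add,
    Finset.sum_eq_single_of_mem r (Finset.mem_range.2 hr)
      fun s _ hs => piContract_of_ne W s b (by omega) (by omega)]

lemma kappaContract_block_lt_five_iff (n : ℕ) (W : ℕ → ℕ → ℂ) :
    (∀ a < 5, ∀ b < 3, kappaContract n W a b = 0) ↔
      ∀ a < 5, ∀ b < 3, W a b = if a = b then W 0 0 else 0 := by
  simp (disch := omega) only [Nat.forall_lt_succ_right, Nat.not_lt_zero, IsEmpty.forall_iff,
    implies_true, true_and, kappaContract_of_lt_five]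
  grind [omegaContract, iotaContract, wedgeContract]

lemma kappaContract_block_pair_iff {n r : ℕ} (hr : r < n) (W : ℕ → ℕ → ℂ) :
    (∀ a, a = 5 + 2 * r ∨ a = 6 + 2 * r → ∀ b < 3, kappaContract n W a b = 0) ↔
      ∀ a, a = 5 + 2 * r ∨ a = 6 + 2 * r → ∀ b < 3, W a b = if a = b then W 0 0 else 0 := by
  simp (disch := omega) only [Nat.forall_lt_succ_right, Nat.not_lt_zero, IsEmpty.forall_iff,
    implies_true, true_and, forall_eq_or_imp, forall_eq, kappaContract_of_pair hr]
  grind [piContract, iotaContract, wedgeContract]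

lemma forall_lt_two_mul_add_five_iff {n : ℕ} {P : ℕ → Prop} :
    (∀ a < 2 * n + 5, P a) ↔
      (∀ a < 5, P a) ∧ ∀ r < n, ∀ a, a = 5 + 2 * r ∨ a = 6 + 2 * r → P a := by
  refine ⟨fun h => ⟨fun a ha => h a (by omega), fun r hr a ha => h a (by omega)⟩,
    fun ⟨h₀, h₁⟩ a ha => ?_⟩
  by_cases ha₅ : a < 5
  · exact h₀ a ha₅
  · exact h₁ ((a - 5) / 2) (by omega) a (by omega)

lemma kappaContract_eq_zero_iff (n : ℕ) (W : ℕ → ℕ → ℂ) :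
    (∀ a < 2 * n + 5, ∀ b < 3, kappaContract n W a b = 0) ↔
      ∀ a < 2 * n + 5, ∀ b < 3, W a b = if a = b then W 0 0 else 0 := by
  rw [forall_lt_two_mul_add_five_iff, forall_lt_two_mul_add_five_iff]
  exact and_congr (kappaContract_block_lt_five_iff n W)
    (forall₂_congr fun r hr => kappaContract_block_pair_iff hr W)

lemma vecMul_kappaMat_eq_zero_iff {d : ℕ} (w : Fin d × Fin 3 → ℂ) :
    vecMul w (kappaMat d) = 0 ↔
      ∀ a < d, ∀ b < 3, kappaContract ((d - 5) / 2) (extendByZero w) a b = 0 := by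
  simp only [funext_iff, Pi.zero_apply, Prod.forall, Fin.forall_iff, vecMul_kappaMat]

lemma exists_eq_smul_mVec_iff {d : ℕ} (hd : 0 < d) (w : Fin d × Fin 3 → ℂ) :
    (∃ c : ℂ, w = c • mVec d) ↔
      ∀ a < d, ∀ b < 3, extendByZero w a b = if a = b then extendByZero w 0 0 else 0 := by
  constructor
  · rintro ⟨c, rfl⟩ a ha b hb
    simp [extendByZero, mVec, ha, hb, hd]
  · intro h
    refine ⟨extendByZero w 0 0, funext fun p => ?_⟩
    have hp := h p.1 p.1.isLt p.2 p.2.isLt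
    rw [extendByZero_coe] at hp
    simp [hp, mVec]

end KappaKernel

open KappaKernel

/-- for odd `d ≥ 5`, the kernel of the alternating bilinear form
`ι(κ)` on `ℂ^d ⊗ ℂ³` (the set of `w` with `ι(κ)(w, u) = 0` for all `u`, i.e.
`wᵀ · M = 0`) is exactly the line spanned by `m = e₁⊗f₁ + e₂⊗f₂ + e₃⊗f₃`;
in particular `ι(κ)` has rank `3d − 1`. -/
theorem kernel_of_iota_kappa (d : ℕ) (hd : 5 ≤ d) (hodd : Odd d) :
    (∀ w : Fin d × Fin 3 → ℂ,
      Matrix.vecMul w (kappaMat d) = 0 ↔ ∃ c : ℂ, w = c • mVec d) ∧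
    (kappaMat d).rank = 3 * d - 1 := by
  obtain ⟨n, rfl⟩ : ∃ n, d = 2 * n + 5 := by
    obtain ⟨k, rfl⟩ := hodd
    exact ⟨k - 2, by omega⟩
  have hker (w : Fin (2 * n + 5) × Fin 3 → ℂ) :
      vecMul w (kappaMat (2 * n + 5)) = 0 ↔ ∃ c : ℂ, w = c • mVec (2 * n + 5) := by
    rw [vecMul_kappaMat_eq_zero_iff, show (2 * n + 5 - 5) / 2 = n by omega,
      kappaContract_eq_zero_iff, exists_eq_smul_mVec_iff (by omega)]
  have hm : mVec (2 * n + 5) ≠ 0 := fun h => by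
    simpa [mVec] using congrFun h (0, 0)
  refine ⟨hker, ?_⟩
  rw [rank_eq_card_sub_one_of_vecMul_eq_zero_iff hm hker, Fintype.card_prod, Fintype.card_fin,
    Fintype.card_fin, mul_comm]
end

section
/- Let T = (ℂ*)ⁿ act diagonally on ℂ^m with integral weights χ_1,…,χ_m ∈ ℤⁿ, i.e. t·(v_1,…,v_m) = (t^{χ_1}v_1,…,t^{χ_m}v_m) where t^{χ} = t_1^{χ(1)}⋯t_n^{χ(n)}. Then for v ∈ ℂ^m, the origin 0 lies in the closure (in the Euclidean topology of ℂ^m) of the orbit {t·v : t ∈ T} if and only if 0 does not lie in the convex hull in ℝⁿ of the support {χ_i : v_i ≠ 0} of v. In other words, v is T-unstable if and only if 0 ∉ Wt(v). -/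
/-!
If `0 = ∑ wₖ χ_{iₖ}` is a convex combination of weights in the support of `v`, then
`u ↦ ∏ₖ ‖u_{iₖ}‖ ^ wₖ` is a continuous function which is constant on the orbit of `v`, positive
there and zero at the origin, so `0` is not in the orbit closure. Conversely, if `0 ∉ Wt(v)`, a
linear form `ℓ` is positive on `supp(v)`, and along the one-parameter subgroup
`s ↦ (e^{-s ℓ_j})_j` every coordinate `e^{-s ⟨χ_i, ℓ⟩} v_i` tends to `0` as `s → ∞`.
-/

open Filter Matrix

variable {𝕜 ι κ : Type*}

def weightSupport [Zero 𝕜] (χ : ι → κ → ℤ) (v : ι → 𝕜) : Set (κ → ℝ) :=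
  {x | ∃ i, v i ≠ 0 ∧ x = fun j => (χ i j : ℝ)}

theorem finite_weightSupport [Finite ι] [Zero 𝕜] (χ : ι → κ → ℤ) (v : ι → 𝕜) :
    (weightSupport χ v).Finite :=
  (Set.finite_range fun i j => (χ i j : ℝ)).subset (by rintro _ ⟨i, -, rfl⟩; exact ⟨i, rfl⟩)

variable [Fintype κ]

def torusSmul [Field 𝕜] (χ : ι → κ → ℤ) (t : κ → 𝕜) (v : ι → 𝕜) : ι → 𝕜 :=
  fun i => (∏ j, t j ^ χ i j) * v i

def torusOrbit [Field 𝕜] (χ : ι → κ → ℤ) (v : ι → 𝕜) : Set (ι → 𝕜) :=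
  {w | ∃ t : κ → 𝕜, (∀ j, t j ≠ 0) ∧ w = torusSmul χ t v}

theorem norm_prod_zpow_eq_exp_sum [NormedField 𝕜] {t : κ → 𝕜} (ht : ∀ j, t j ≠ 0)
    (a : κ → ℤ) : ‖∏ j, t j ^ a j‖ = Real.exp (∑ j, a j * Real.log ‖t j‖) := by
  rw [norm_prod, Real.exp_sum]
  refine Finset.prod_congr rfl fun j _ => ?_
  rw [norm_zpow, ← Real.rpow_intCast, Real.rpow_def_of_pos (norm_pos_iff.2 (ht j)), mul_comm]

theorem prod_norm_torusSmul_rpow [NormedField 𝕜] {σ : Type*} [Fintype σ] (χ : ι → κ → ℤ)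
    (g : σ → ι) (w : σ → ℝ) (hbal : ∀ j, ∑ k, w k * χ (g k) j = 0) {t : κ → 𝕜}
    (ht : ∀ j, t j ≠ 0) (v : ι → 𝕜) :
    ∏ k, ‖torusSmul χ t v (g k)‖ ^ w k = ∏ k, ‖v (g k)‖ ^ w k := by
  have hchar : ∏ k, ‖∏ j, t j ^ χ (g k) j‖ ^ w k = 1 := by
    simp_rw [norm_prod_zpow_eq_exp_sum ht, ← Real.exp_mul, ← Real.exp_sum, Real.exp_eq_one_iff]
    calc ∑ k, (∑ j, (χ (g k) j : ℝ) * Real.log ‖t j‖) * w k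
        = ∑ j, (∑ k, w k * χ (g k) j) * Real.log ‖t j‖ := by
          simp_rw [Finset.sum_mul]
          rw [Finset.sum_comm]
          exact Finset.sum_congr rfl fun _ _ => Finset.sum_congr rfl fun _ _ => by ring
      _ = 0 := by simp [hbal]
  simp_rw [torusSmul, norm_mul, Real.mul_rpow (norm_nonneg _) (norm_nonneg _),
    Finset.prod_mul_distrib, hchar, one_mul]

theorem zero_notMem_closure_torusOrbit [NormedField 𝕜] {σ : Type*} [Fintype σ]
    (χ : ι → κ → ℤ) (v : ι → 𝕜) (g : σ → ι) (w : σ → ℝ) (hw0 : ∀ k, 0 ≤ w k)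
    (hw1 : ∑ k, w k = 1) (hv : ∀ k, v (g k) ≠ 0) (hbal : ∀ j, ∑ k, w k * χ (g k) j = 0) :
    (0 : ι → 𝕜) ∉ closure (torusOrbit χ v) := by
  set Φ : (ι → 𝕜) → ℝ := fun u => ∏ k, ‖u (g k)‖ ^ w k
  have hΦ : Continuous Φ := continuous_finsetProd _ fun k _ =>
    (continuous_norm.comp (continuous_apply _)).rpow_const fun _ => Or.inr (hw0 k)
  have horbit : torusOrbit χ v ⊆ Φ ⁻¹' {Φ v} := by
    rintro _ ⟨t, ht, rfl⟩
    exact prod_norm_torusSmul_rpow χ g w hbal ht v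
  have hΦv : Φ v ≠ 0 := Finset.prod_ne_zero_iff.2 fun k _ =>
    (Real.rpow_pos_of_pos (norm_pos_iff.2 (hv k)) _).ne'
  obtain ⟨k, -, hk⟩ := Finset.exists_ne_zero_of_sum_ne_zero (hw1 ▸ one_ne_zero)
  have hΦ0 : Φ 0 = 0 := Finset.prod_eq_zero (Finset.mem_univ k) (by simp [Real.zero_rpow hk])
  intro h0
  have hΦ0v : Φ 0 = Φ v := closure_minimal horbit (isClosed_singleton.preimage hΦ) h0
  exact hΦv (hΦ0v.symm.trans hΦ0)

theorem exists_forall_dotProduct_pos_of_zero_notMem_convexHull {S : Set (κ → ℝ)}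
    (hS : S.Finite) (h0 : (0 : κ → ℝ) ∉ convexHull ℝ S) : ∃ ℓ : κ → ℝ, ∀ x ∈ S, 0 < x ⬝ᵥ ℓ := by
  classical
  obtain ⟨f, u, hf0, hfS⟩ := geometric_hahn_banach_point_closed (convex_convexHull ℝ S)
    (hS.isClosed_convexHull (𝕜 := ℝ)) h0
  refine ⟨fun j => f fun k => if j = k then 1 else 0, fun x hx => ?_⟩
  have hfx : f x = x ⬝ᵥ fun j => f fun k => if j = k then 1 else 0 :=
    LinearMap.pi_apply_eq_sum_univ (f : (κ → ℝ) →ₗ[ℝ] ℝ) x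
  rw [map_zero] at hf0
  linarith [hfS x (subset_convexHull ℝ S hx)]

theorem zero_mem_closure_torusOrbit_of_forall_pos [RCLike 𝕜] (χ : ι → κ → ℤ) (v : ι → 𝕜)
    (ℓ : κ → ℝ) (hℓ : ∀ i, v i ≠ 0 → 0 < (fun j => (χ i j : ℝ)) ⬝ᵥ ℓ) :
    (0 : ι → 𝕜) ∈ closure (torusOrbit χ v) := by
  set t : ℝ → κ → 𝕜 := fun s j => (Real.exp (-(s * ℓ j)) : 𝕜)
  have ht : ∀ s j, t s j ≠ 0 := fun s j => RCLike.ofReal_ne_zero.2 (Real.exp_pos _).ne'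
  have hnorm : ∀ s i, ‖torusSmul χ (t s) v i‖
      = Real.exp (-(s * (fun j => (χ i j : ℝ)) ⬝ᵥ ℓ)) * ‖v i‖ := by
    intro s i
    rw [torusSmul, norm_mul, norm_prod_zpow_eq_exp_sum (ht s)]
    simp [t, dotProduct, Finset.mul_sum, mul_left_comm]
  refine mem_closure_of_tendsto (f := fun s => torusSmul χ (t s) v) (b := atTop) ?_
    (Eventually.of_forall fun s => ⟨t s, ht s, rfl⟩)
  refine tendsto_pi_nhds.2 fun i => tendsto_zero_iff_norm_tendsto_zero.2 ?_
  simp_rw [hnorm]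
  by_cases hvi : v i = 0
  · simp [hvi]
  · simpa using (Real.tendsto_exp_neg_atTop_nhds_zero.comp
      (tendsto_id.atTop_mul_const (hℓ i hvi))).mul_const ‖v i‖

theorem zero_mem_closure_torusOrbit_iff [Finite ι] [RCLike 𝕜] (χ : ι → κ → ℤ) (v : ι → 𝕜) :
    (0 : ι → 𝕜) ∈ closure (torusOrbit χ v) ↔ (0 : κ → ℝ) ∉ convexHull ℝ (weightSupport χ v) := by
  constructor
  · intro hcl h0
    obtain ⟨σ, _, w, z, hw0, hw1, hz, hbal⟩ := mem_convexHull_iff_exists_fintype.1 h0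
    choose g hg hzg using hz
    obtain rfl : z = fun k j => (χ (g k) j : ℝ) := funext hzg
    refine zero_notMem_closure_torusOrbit χ v g w hw0 hw1 hg (fun j => ?_) hcl
    simpa using congrFun hbal j
  · intro h0
    obtain ⟨ℓ, hℓ⟩ :=
      exists_forall_dotProduct_pos_of_zero_notMem_convexHull (finite_weightSupport χ v) h0
    exact zero_mem_closure_torusOrbit_of_forall_pos χ v ℓ fun i hi => hℓ _ ⟨i, hi, rfl⟩

/-- let `T = (ℂ*)ⁿ` act diagonally on `ℂ^m` with integral
weights `χ₁, …, χ_m ∈ ℤⁿ`, i.e. `t·v = (t^{χ_1} v_1, …, t^{χ_m} v_m)` with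
`t^χ = t_1^{χ(1)} ⋯ t_n^{χ(n)}`.  Then `0` lies in the (Euclidean) closure of
the orbit `T·v` if and only if `0` does **not** lie in the convex hull in `ℝⁿ`
of the support `{χ_i : v_i ≠ 0}` of `v`:  `v` is `T`-unstable iff `0 ∉ Wt(v)`. -/
theorem torus_unstable_iff_zero_not_in_weight_polytope
    (n m : ℕ) (χ : Fin m → Fin n → ℤ) (v : Fin m → ℂ) :
    (0 : Fin m → ℂ) ∈ closure
        {w : Fin m → ℂ | ∃ t : Fin n → ℂ, (∀ j, t j ≠ 0) ∧
          w = fun i => (∏ j, t j ^ χ i j) * v i} ↔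
      (0 : Fin n → ℝ) ∉ convexHull ℝ
        {x : Fin n → ℝ | ∃ i : Fin m, v i ≠ 0 ∧ x = fun j => (χ i j : ℝ)} :=
  zero_mem_closure_torusOrbit_iff χ v
end
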